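/- With J* = |F_a(e^{iω})/F_a*(e^{iω})|² λ_e (a constant independent of ω since F_a/F_a* is all-pass) and Ā_a = F_a, the noise variance satisfies λ_e = J* · |Ā_a*(e^{iω})/Ā_a(e^{iω})|², and explicitly λ_e = J* / Π_{k=1}^{n}|p_k|², where p_k are the roots of F_a. -/

import Mathlib

open Complex

lemma exp_norm_one (ω : ℝ) : ‖Complex.exp (-(ω * Complex.I))‖ = 1 := by
  rw [show -((ω:ℂ) * Complex.I) = (-ω : ℝ) * Complex.I by push_cast; ring]
  simp [Complex.norm_exp]

lemma Fa_ne (n : ℕ) (p : Fin n → ℂ) (hp : ∀ k, 1 < ‖p k‖) (ω : ℝ) :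
    (∏ k, (1 - p k * Complex.exp (-(ω * Complex.I)))) ≠ 0 := by
  refine Finset.prod_ne_zero_iff.2 fun k _ h => ?_
  have h1 : (1 : ℂ) = p k * Complex.exp (-(ω * Complex.I)) := by
    linear_combination h
  have h2 := congrArg norm h1
  rw [norm_mul, exp_norm_one, mul_one, norm_one] at h2
  linarith [hp k]

lemma Fastar_ne (n : ℕ) (p : Fin n → ℂ) (hp : ∀ k, 1 < ‖p k‖) (ω : ℝ) :
    (∏ k, (1 - (p k)⁻¹ * Complex.exp (-(ω * Complex.I)))) ≠ 0 := by
  refine Finset.prod_ne_zero_iff.2 fun k _ h => ?_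
  have h1 : (1 : ℂ) = (p k)⁻¹ * Complex.exp (-(ω * Complex.I)) := by
    linear_combination h
  have h2 := congrArg norm h1
  rw [norm_mul, exp_norm_one, mul_one, norm_inv, norm_one] at h2
  have h3 : ‖p k‖⁻¹ < 1 := by
    rw [inv_lt_one_iff₀]; right; exact hp k
  linarith

/-- Noise-variance correction of Corollary 1: with
`J* = |F_a(e^{iω})/F_a*(e^{iω})|² λ_e` (constant in `ω` since `F_a/F_a*` is
all-pass) and `Ā_a = F_a`, the true variance satisfies
`λ_e = J* |Ā_a*(e^{iω})/Ā_a(e^{iω})|²` for every `ω`, and explicitly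
`λ_e = J* / Π |p_k|²`. -/
theorem stmt_11 (n : ℕ) (p : Fin n → ℂ) (hp : ∀ k, 1 < ‖p k‖)
    (lam : ℝ) (hlam : 0 < lam)
    (Fa Fastar : ℝ → ℂ)
    (hFa : ∀ ω, Fa ω = ∏ k, (1 - p k * Complex.exp (-(ω * Complex.I))))
    (hFastar : ∀ ω, Fastar ω = ∏ k, (1 - (p k)⁻¹ * Complex.exp (-(ω * Complex.I))))
    (Jstar : ℝ)
    (hJstar : ∀ ω : ℝ, Jstar = ‖Fa ω / Fastar ω‖ ^ 2 * lam) :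
    (∀ ω : ℝ, lam = Jstar * ‖Fastar ω / Fa ω‖ ^ 2) ∧
    lam = Jstar / ∏ k, ‖p k‖ ^ 2 := by
  have hFane : ∀ ω, Fa ω ≠ 0 := fun ω => (hFa ω) ▸ Fa_ne n p hp ω
  have hFsne : ∀ ω, Fastar ω ≠ 0 := fun ω => (hFastar ω) ▸ Fastar_ne n p hp ω
  constructor
  · intro ω
    have ha : ‖Fa ω‖ ≠ 0 := norm_ne_zero_iff.mpr (hFane ω)
    have hb : ‖Fastar ω‖ ≠ 0 := norm_ne_zero_iff.mpr (hFsne ω)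
    rw [hJstar ω, norm_div, norm_div, div_pow, div_pow]
    field_simp
  · have h0 : Jstar = (∏ k, ‖p k‖ ^ 2) * lam := by
      rw [hJstar 0, hFa 0, hFastar 0]
      congr 1
      have he : Complex.exp (-((0:ℝ) * Complex.I)) = 1 := by simp
      rw [he]
      have hratio : (∏ k, (1 - p k * 1)) / (∏ k, (1 - (p k)⁻¹ * 1))
          = ∏ k, ((1 - p k) / (1 - (p k)⁻¹)) := by
        rw [Finset.prod_div_distrib]; simp
      rw [hratio, norm_prod, ← Finset.prod_pow]
      refine Finset.prod_congr rfl fun k _ => ?_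
      have hpk : p k ≠ 0 := by
        intro h
        have h4 := hp k
        rw [h, norm_zero] at h4
        linarith
      have h1 : (1 - (p k)⁻¹) = (p k)⁻¹ * (p k - 1) := by
        field_simp
      have h2 : ‖p k - 1‖ = ‖1 - p k‖ := by
        rw [← norm_neg]; ring_nf
      have hne : ‖(1:ℂ) - p k‖ ≠ 0 := by
        intro h
        have h5 : (1:ℂ) - p k = 0 := norm_eq_zero.mp h
        have h6 : p k = 1 := by linear_combination -h5
        have h7 := hp k
        rw [h6, norm_one] at h7
        linarith
      have hpn : ‖p k‖ ≠ 0 := norm_ne_zero_iff.mpr hpk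
      congr 1
      rw [h1, norm_div, norm_mul, norm_inv, h2]
      rw [← div_eq_inv_mul, div_div_eq_mul_div, mul_comm, mul_div_assoc,
        div_self hne, mul_one]
    rw [h0]
    have hprod : (0:ℝ) < ∏ k, ‖p k‖ ^ 2 :=
      Finset.prod_pos fun k _ => pow_pos (by linarith [hp k]) 2
    rw [mul_comm, mul_div_assoc, div_self hprod.ne', mul_one]
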